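/- Let D be an ultrafilter on a set I and let X be a GO space. Then X is D-compact if and only if X has no gap and no pseudo-gap whose type is an infinite regular cardinal ν such that D is ν-decomposable. -/

import Mathlib

universe u v

open Set Cardinal Filter Topology TopologicalSpace

section Defs

variable {X : Type u} [LinearOrder X]

/-- A subset `Y` of a linear order `X`, having no maximum, is `lam`-full in `X` on the right
if for every `y ∈ Y` the set `⋃ y' ∈ Y, (y, y')` (intervals computed in `X`)
has cardinality at least `lam`. -/
def FullRight (lam : Cardinal.{u}) (Y : Set X) : Prop :=
  (¬ ∃ m ∈ Y, ∀ y ∈ Y, y ≤ m) ∧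
    ∀ y ∈ Y, lam ≤ #(⋃ y' ∈ Y, Ioo y y')

/-- A subset `Y` of a linear order `X`, having no minimum, is `lam`-full in `X` on the left
if for every `y ∈ Y` the set `⋃ y' ∈ Y, (y', y)` (intervals computed in `X`)
has cardinality at least `lam`. -/
def FullLeft (lam : Cardinal.{u}) (Y : Set X) : Prop :=
  (¬ ∃ m ∈ Y, ∀ y ∈ Y, m ≤ y) ∧
    ∀ y ∈ Y, lam ≤ #(⋃ y' ∈ Y, Ioo y' y)

/-- The pair `(A, B)` is a gap of the space `X`: `A`, `B` are open, `A ∪ B = X`,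
every element of `A` is less than every element of `B`, `A` has no maximum and `B` has
no minimum (`A` or `B` may be empty). -/
def IsGap [TopologicalSpace X] (A B : Set X) : Prop :=
  IsOpen A ∧ IsOpen B ∧ A ∪ B = Set.univ ∧ (∀ a ∈ A, ∀ b ∈ B, a < b) ∧
    (¬ ∃ m ∈ A, ∀ a ∈ A, a ≤ m) ∧ (¬ ∃ m ∈ B, ∀ b ∈ B, m ≤ b)

/-- The pair `(A, B)` is a pseudo-gap of the space `X`: `A`, `B` are open and nonempty,
`A ∪ B = X`, every element of `A` is less than every element of `B`, and either `A` has a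
maximum and `B` has no minimum, or `A` has no maximum and `B` has a minimum. -/
def IsPseudoGap [TopologicalSpace X] (A B : Set X) : Prop :=
  IsOpen A ∧ IsOpen B ∧ A ∪ B = Set.univ ∧ (∀ a ∈ A, ∀ b ∈ B, a < b) ∧
    A.Nonempty ∧ B.Nonempty ∧
    (((∃ m ∈ A, ∀ a ∈ A, a ≤ m) ∧ ¬ ∃ m ∈ B, ∀ b ∈ B, m ≤ b) ∨
      ((¬ ∃ m ∈ A, ∀ a ∈ A, a ≤ m) ∧ ∃ m ∈ B, ∀ b ∈ B, m ≤ b))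

/-- The cofinality of `A`: the least cardinality of a subset of `A` cofinal in `A`. -/
noncomputable def cofinCard (A : Set X) : Cardinal.{u} :=
  sInf {c | ∃ S : Set X, S ⊆ A ∧ (∀ a ∈ A, ∃ s ∈ S, a ≤ s) ∧ c = #S}

/-- The coinitiality of `B`: the least cardinality of a subset of `B` coinitial in `B`. -/
noncomputable def coinitCard (B : Set X) : Cardinal.{u} :=
  sInf {c | ∃ S : Set X, S ⊆ B ∧ (∀ b ∈ B, ∃ s ∈ S, s ≤ b) ∧ c = #S}

/-- `mu` is a type of the gap `(A, B)`: `mu` is the cofinality of `A` or the coinitiality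
of `B`. -/
def IsGapType (mu : Cardinal.{u}) (A B : Set X) : Prop :=
  mu = cofinCard A ∨ mu = coinitCard B

/-- `mu` is the type of the pseudo-gap `(A, B)`: the cofinality of `A` if `B` has a minimum,
the coinitiality of `B` if `A` has a maximum. -/
def IsPseudoGapType (mu : Cardinal.{u}) (A B : Set X) : Prop :=
  ((∃ m ∈ B, ∀ b ∈ B, m ≤ b) ∧ mu = cofinCard A) ∨
    ((∃ m ∈ A, ∀ a ∈ A, a ≤ m) ∧ mu = coinitCard B)

end Defs

/-- A topological space is `[ν, ν]`-compact if every open cover of cardinality at most `ν`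
has a subcover of cardinality less than `ν`. -/
def NuNuCompact (X : Type u) [TopologicalSpace X] (ν : Cardinal.{u}) : Prop :=
  ∀ 𝒰 : Set (Set X), (∀ U ∈ 𝒰, IsOpen U) → ⋃₀ 𝒰 = Set.univ → #𝒰 ≤ ν →
    ∃ 𝒱 ⊆ 𝒰, #𝒱 < ν ∧ ⋃₀ 𝒱 = Set.univ

/-- A topological space is weakly `[ν, ν]`-compact if every open cover of cardinality at
most `ν` has a subfamily of cardinality less than `ν` whose union is dense. -/
def WeakNuNuCompact (X : Type u) [TopologicalSpace X] (ν : Cardinal.{u}) : Prop :=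
  ∀ 𝒰 : Set (Set X), (∀ U ∈ 𝒰, IsOpen U) → ⋃₀ 𝒰 = Set.univ → #𝒰 ≤ ν →
    ∃ 𝒱 ⊆ 𝒰, #𝒱 < ν ∧ Dense (⋃₀ 𝒱)

/-- A topological space is initially `lam`-compact if every open cover of cardinality at
most `lam` has a finite subcover. -/
def InitiallyCompact (X : Type u) [TopologicalSpace X] (lam : Cardinal.{u}) : Prop :=
  ∀ 𝒰 : Set (Set X), (∀ U ∈ 𝒰, IsOpen U) → ⋃₀ 𝒰 = Set.univ → #𝒰 ≤ lam →
    ∃ 𝒱 ⊆ 𝒰, 𝒱.Finite ∧ ⋃₀ 𝒱 = Set.univ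

/-- A topological space is weakly initially `lam`-compact if every open cover of cardinality
at most `lam` has a finite subfamily whose union is dense. -/
def WeakInitiallyCompact (X : Type u) [TopologicalSpace X] (lam : Cardinal.{u}) : Prop :=
  ∀ 𝒰 : Set (Set X), (∀ U ∈ 𝒰, IsOpen U) → ⋃₀ 𝒰 = Set.univ → #𝒰 ≤ lam →
    ∃ 𝒱 ⊆ 𝒰, 𝒱.Finite ∧ Dense (⋃₀ 𝒱)

/-- The sequence `x` `D`-converges to `p`: for every open neighbourhood `U` of `p`,
`{i | x i ∈ U} ∈ D`. -/
def DConv {I : Type v} {X : Type u} [TopologicalSpace X] (D : Ultrafilter I)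
    (x : I → X) (p : X) : Prop :=
  ∀ U : Set X, IsOpen U → p ∈ U → {i | x i ∈ U} ∈ D

/-- `X` is `D`-compact: every `I`-indexed sequence of elements of `X` `D`-converges to some
point of `X`. -/
def DCompact {I : Type v} (D : Ultrafilter I) (X : Type u) [TopologicalSpace X] : Prop :=
  ∀ x : I → X, ∃ p : X, DConv D x p

/-- `p` is a `D`-limit point of the sequence of sets `Y`: for every neighbourhood `U`
of `p`, `{i | U ∩ Y i ≠ ∅} ∈ D`. -/
def DLimitPt {I : Type v} {X : Type u} [TopologicalSpace X] (D : Ultrafilter I)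
    (Y : I → Set X) (p : X) : Prop :=
  ∀ U ∈ nhds p, {i | (U ∩ Y i).Nonempty} ∈ D

/-- `X` is `D`-pseudocompact: every `I`-indexed sequence of nonempty open sets of `X` has a
`D`-limit point. -/
def DPseudocompact {I : Type v} (D : Ultrafilter I) (X : Type u) [TopologicalSpace X] : Prop :=
  ∀ O : I → Set X, (∀ i, IsOpen (O i)) → (∀ i, (O i).Nonempty) → ∃ p : X, DLimitPt D O p

/-- The ultrafilter `D` is `ν`-decomposable: there is `f : I → ν` such that the preimage of
every subset of `ν` of cardinality less than `ν` is not in `D`. -/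
def Decomposable {I : Type v} (D : Ultrafilter I) (ν : Cardinal.{u}) : Prop :=
  ∃ f : I → ν.ord.ToType, ∀ S : Set ν.ord.ToType, #S < ν → f ⁻¹' S ∉ D

/-!
Suppose `x : I → X` has no `D`-limit and let `L` be the set of points that `x` eventually
exceeds along `D`. A convex neighbourhood that `x` does not eventually enter cannot meet both
`L` and its complement, so `L` is clopen. If `x` eventually lies in `L`, then `x` tends to the top
of `L` along `D`; reading `x` off a strictly increasing cofinal sequence of length `cof L` gives a
`cof L`-decomposition of `D`, and `cof L` is regular, so `(L, Lᶜ)` is a gap or pseudo-gap of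
forbidden type. Otherwise `x` eventually lies above `L`, which is the same situation in the
reversed order.

Conversely, if `ν` is the cofinality of the left side `A` of such a cut and `f : I → ν` witnesses
decomposability, then `f` tends to `ν` along `D`, and composing it with a cofinal sequence in `A`
gives a sequence that can converge neither inside the closed set `A` (it leaves every `Iio a`) nor
in the open complement.
-/

open OrderDual (toDual ofDual)

section Cofinality

variable {α : Type u} [LinearOrder α]

theorem Order.exists_forall_lt_of_mk_lt_cof {T : Set α} (hT : #T < Order.cof α) :
    ∃ a, ∀ t ∈ T, t < a := by
  by_contra! h
  exact hT.not_ge (Order.cof_le h)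

theorem Order.exists_strictMono_isCofinal_range (hα : ℵ₀ ≤ Order.cof α) :
    ∃ c : (Order.cof α).ord.ToType → α, StrictMono c ∧ IsCofinal (range c) := by
  obtain ⟨s, hs, hcard⟩ := Order.exists_cof_eq α
  obtain ⟨e⟩ : Nonempty ((Order.cof α).ord.ToType ≃ s) :=
    Cardinal.eq.1 (by rw [mk_ord_toType, hcard])
  have hsmall (β : (Order.cof α).ord.ToType) (g : Iio β → α) :
      #(insert (e β : α) (range g) : Set α) < Order.cof α :=
    mk_insert_le.trans_lt <| add_lt_of_lt hα (mk_range_le.trans_lt (by simpa using mk_Iio_lt β))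
      (one_lt_aleph0.trans_le hα)
  choose next hnext using fun β g => Order.exists_forall_lt_of_mk_lt_cof (hsmall β g)
  -- transfinite recursion: `c β` lies above `e β` and above every earlier value
  let F (β : (Order.cof α).ord.ToType) (ih : ∀ γ < β, α) : α := next β fun γ => ih γ γ.2
  let c := WellFoundedLT.fix F
  have hc (β) : ∀ t ∈ insert (e β : α) (range fun γ : Iio β => c γ), t < c β := by
    rw [show c β = F β fun γ _ => c γ from WellFoundedLT.fix_eq F β]
    exact hnext β _
  refine ⟨c, fun γ β h => hc β _ (mem_insert_of_mem _ ⟨⟨γ, h⟩, rfl⟩), fun a => ?_⟩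
  obtain ⟨t, ht, hat⟩ := hs a
  refine ⟨c (e.symm ⟨t, ht⟩), mem_range_self _, hat.trans (le_of_lt ?_)⟩
  simpa using hc (e.symm ⟨t, ht⟩) _ (mem_insert _ _)

theorem Order.isRegular_cof (hα : ℵ₀ ≤ Order.cof α) : (Order.cof α).IsRegular := by
  obtain ⟨c, hc, hcof⟩ := Order.exists_strictMono_isCofinal_range hα
  refine ⟨hα, ?_⟩
  rw [← Ordinal.cof_toType, Order.cof_congr_of_strictMono hc hcof]

theorem cofinCard_eq_cof (A : Set α) : cofinCard A = Order.cof A := by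
  apply le_antisymm
  · obtain ⟨s, hs, hcard⟩ := Order.exists_cof_eq A
    refine csInf_le' ⟨(↑) '' s, by rintro _ ⟨a, -, rfl⟩; exact a.2, fun a ha => ?_, ?_⟩
    · obtain ⟨b, hb, hab⟩ := hs ⟨a, ha⟩
      exact ⟨b, mem_image_of_mem _ hb, hab⟩
    · rw [mk_image_eq Subtype.val_injective, hcard]
  · refine le_csInf ⟨_, A, subset_rfl, fun a ha => ⟨a, ha, le_rfl⟩, rfl⟩ ?_
    rintro _ ⟨S, hSA, hS, rfl⟩
    calc Order.cof A ≤ #((↑) ⁻¹' S : Set A) := Order.cof_le fun a => by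
          obtain ⟨s, hs, has⟩ := hS a a.2
          exact ⟨⟨s, hSA hs⟩, hs, has⟩
      _ ≤ #S := mk_preimage_of_injective _ _ Subtype.val_injective

end Cofinality

section Decomposable

variable {I : Type v} {D : Ultrafilter I}

theorem decomposable_iff_exists_tendsto_atTop {ν : Cardinal.{u}} (hν : ν.IsRegular) :
    Decomposable D ν ↔ ∃ f : I → ν.ord.ToType, Tendsto f D atTop := by
  refine ⟨fun ⟨f, hf⟩ => ⟨f, tendsto_atTop.2 fun β => ?_⟩, fun ⟨f, hf⟩ => ⟨f, fun S hS hSD => ?_⟩⟩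
  · exact (Ultrafilter.eventually_not.2 (hf _ (by simpa using mk_Iio_lt β))).mono
      fun _ hi => not_lt.1 hi
  · -- a set of size `< ν` is bounded in `ν`, as `ν` is regular
    obtain ⟨β, hβ⟩ := Order.exists_forall_lt_of_mk_lt_cof (α := ν.ord.ToType) (T := S)
      (by rwa [Ordinal.cof_toType, hν.cof_ord])
    obtain ⟨i, hβi, hiS⟩ := ((hf.eventually_ge_atTop β).and hSD).exists
    exact (hβ _ hiS).not_ge hβi

theorem exists_tendsto_atTop_iff_decomposable_cof {α : Type u} [LinearOrder α]
    (hα : ℵ₀ ≤ Order.cof α) :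
    (∃ y : I → α, Tendsto y D atTop) ↔ Decomposable D (Order.cof α) := by
  obtain ⟨c, hc, hcof⟩ := Order.exists_strictMono_isCofinal_range hα
  choose g hg using fun a => exists_range_iff.1 (hcof a)
  have hc_tendsto : Tendsto c atTop atTop := hc.monotone.tendsto_atTop_atTop fun a => ⟨g a, hg a⟩
  have hg_tendsto : Tendsto g atTop atTop := tendsto_atTop.2 fun β =>
    (eventually_ge_atTop (c β)).mono fun a ha => hc.le_iff_le.1 (ha.trans (hg a))
  rw [decomposable_iff_exists_tendsto_atTop (Order.isRegular_cof hα)]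
  exact ⟨fun ⟨y, hy⟩ => ⟨g ∘ y, hg_tendsto.comp hy⟩, fun ⟨f, hf⟩ => ⟨c ∘ f, hc_tendsto.comp hf⟩⟩

end Decomposable

section GOSpace

def HasOrdConnectedBasis (X : Type u) [LinearOrder X] [TopologicalSpace X] : Prop :=
  ∃ 𝓑 : Set (Set X), IsTopologicalBasis 𝓑 ∧ ∀ s ∈ 𝓑, s.OrdConnected

variable {X : Type u} [LinearOrder X] [TopologicalSpace X]

namespace HasOrdConnectedBasis

theorem exists_ordConnected_subset (hX : HasOrdConnectedBasis X) {U : Set X} (hU : IsOpen U)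
    {p : X} (hp : p ∈ U) : ∃ V, IsOpen V ∧ V.OrdConnected ∧ p ∈ V ∧ V ⊆ U := by
  obtain ⟨𝓑, h𝓑, hconv⟩ := hX
  obtain ⟨V, hV, hpV, hVU⟩ := h𝓑.exists_subset_of_mem_open hp hU
  exact ⟨V, h𝓑.isOpen hV, hconv V hV, hpV, hVU⟩

theorem dual (hX : HasOrdConnectedBasis X) : HasOrdConnectedBasis Xᵒᵈ := by
  obtain ⟨𝓑, h𝓑, hconv⟩ := hX
  exact ⟨𝓑, h𝓑, fun s hs => (hconv s hs).dual⟩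

theorem closedIciTopology [T1Space X] (hX : HasOrdConnectedBasis X) : ClosedIciTopology X := by
  refine ⟨fun a => isOpen_compl_iff.1 ?_⟩
  rw [compl_Ici, isOpen_iff_forall_mem_open]
  intro y hy
  obtain ⟨V, hV, hVc, hyV, hVa⟩ := hX.exists_ordConnected_subset isOpen_compl_singleton hy.ne
  exact ⟨V, fun v hv => lt_of_not_ge fun hav => hVa (hVc.out hyV hv ⟨hy.le, hav⟩) rfl, hV, hyV⟩

theorem closedIicTopology [T1Space X] (hX : HasOrdConnectedBasis X) : ClosedIicTopology X :=
  have : T1Space Xᵒᵈ := ‹T1Space X›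
  have := hX.dual.closedIciTopology
  ⟨fun a => isClosed_Ici (a := toDual a)⟩

end HasOrdConnectedBasis

end GOSpace

section DCompact

variable {I : Type v} {D : Ultrafilter I} {X : Type u} [TopologicalSpace X]

theorem dConv_iff_tendsto {x : I → X} {p : X} : DConv D x p ↔ Tendsto x D (𝓝 p) :=
  tendsto_nhds.symm

variable [LinearOrder X]

theorem isClosed_of_isOpen_of_union_eq_univ {A B : Set X} (hB : IsOpen B)
    (hAB : A ∪ B = Set.univ) (hlt : ∀ a ∈ A, ∀ b ∈ B, a < b) : IsClosed A := by
  have hB' : Aᶜ = B := Subset.antisymm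
    (fun x hx => ((hAB ▸ mem_univ x : x ∈ A ∪ B)).resolve_left hx)
    fun x hxB hxA => (hlt x hxA x hxB).false
  exact isOpen_compl_iff.1 (hB' ▸ hB)

theorem IsClosed.not_tendsto_nhds_of_tendsto_atTop [ClosedIciTopology X] {A : Set X}
    (hA : IsClosed A) [NoMaxOrder A] {y : I → A} (hy : Tendsto y D atTop) (p : X) :
    ¬ Tendsto (fun i => (y i : X)) D (𝓝 p) := by
  intro hp
  by_cases hpA : p ∈ A
  · obtain ⟨a, ha⟩ := exists_gt (⟨p, hpA⟩ : A)
    obtain ⟨i, hia, hai⟩ :=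
      ((hp.eventually_lt_const (show p < a from ha)).and (hy.eventually_gt_atTop a)).exists
    exact hia.not_gt hai
  · obtain ⟨i, hi⟩ := (hp.eventually (hA.isOpen_compl.mem_nhds hpA)).exists
    exact hi (y i).2

theorem not_dCompact_of_decomposable_cofinCard [ClosedIciTopology X] {A : Set X}
    (hA : IsClosed A) (hcof : ℵ₀ ≤ cofinCard A) (hD : Decomposable D (cofinCard A)) :
    ¬ DCompact D X := by
  rw [cofinCard_eq_cof] at hcof hD
  obtain ⟨y, hy⟩ := (exists_tendsto_atTop_iff_decomposable_cof hcof).2 hD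
  have : Nonempty A := Order.cof_ne_zero_iff.1 (aleph0_pos.trans_le hcof).ne'
  have : NoMaxOrder A := (noTopOrder_iff_noMaxOrder A).1 <|
    Order.one_lt_cof_iff.1 (one_lt_aleph0.trans_le hcof)
  intro hDC
  obtain ⟨p, hp⟩ := hDC fun i => y i
  exact hA.not_tendsto_nhds_of_tendsto_atTop hy p (dConv_iff_tendsto.1 hp)

theorem not_dCompact_of_decomposable_coinitCard [ClosedIicTopology X] {B : Set X}
    (hB : IsClosed B) (hcoinit : ℵ₀ ≤ coinitCard B) (hD : Decomposable D (coinitCard B)) :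
    ¬ DCompact D X :=
  not_dCompact_of_decomposable_cofinCard (X := Xᵒᵈ) hB hcoinit hD

theorem not_dCompact_of_isGapType [ClosedIciTopology X] [ClosedIicTopology X] {A B : Set X}
    (hA : IsOpen A) (hB : IsOpen B) (hAB : A ∪ B = Set.univ) (hlt : ∀ a ∈ A, ∀ b ∈ B, a < b)
    {ν : Cardinal.{u}} (hν : ℵ₀ ≤ ν) (hD : Decomposable D ν) (htype : IsGapType ν A B) :
    ¬ DCompact D X := by
  rcases htype with rfl | rfl
  · exact not_dCompact_of_decomposable_cofinCard
      (isClosed_of_isOpen_of_union_eq_univ hB hAB hlt) hν hD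
  · exact not_dCompact_of_decomposable_coinitCard
      (isClosed_of_isOpen_of_union_eq_univ (X := Xᵒᵈ) hA ((union_comm _ _).trans hAB)
        fun b hb a ha => hlt a ha b hb) hν hD

end DCompact

section LowerCut

variable {I : Type v} {X : Type u} [LinearOrder X]

def lowerCut (D : Ultrafilter I) (x : I → X) : Set X :=
  {a | ∀ᶠ i in (D : Filter I), a < x i}

variable {D : Ultrafilter I} {x : I → X}

theorem isLowerSet_lowerCut : IsLowerSet (lowerCut D x) :=
  fun _ _ hba ha => ha.mono fun _ hi => hba.trans_lt hi

theorem eventually_mem_of_mem_lowerCut_of_notMem {a b : X} (ha : a ∈ lowerCut D x)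
    (hb : b ∉ lowerCut D x) {V : Set X} (hV : V.OrdConnected) (haV : a ∈ V) (hbV : b ∈ V) :
    ∀ᶠ i in (D : Filter I), x i ∈ V := by
  filter_upwards [ha, Ultrafilter.eventually_not.2 hb] with i hai hib
  exact hV.out haV hbV ⟨hai.le, not_lt.1 hib⟩

theorem noMaxOrder_lowerCut (hx : ∀ᶠ i in (D : Filter I), x i ∈ lowerCut D x) :
    NoMaxOrder (lowerCut D x) :=
  ⟨fun a => let ⟨i, hi, hai⟩ := (hx.and a.2).exists; ⟨⟨x i, hi⟩, hai⟩⟩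

theorem isRegular_cofinCard_lowerCut_and_decomposable
    (hx : ∀ᶠ i in (D : Filter I), x i ∈ lowerCut D x) :
    (cofinCard (lowerCut D x)).IsRegular ∧ Decomposable D (cofinCard (lowerCut D x)) := by
  classical
  set L := lowerCut D x
  obtain ⟨i₀, hi₀⟩ := hx.exists
  have : Nonempty L := ⟨⟨x i₀, hi₀⟩⟩
  have := noMaxOrder_lowerCut hx
  let y (i : I) : L := if h : x i ∈ L then ⟨x i, h⟩ else ⟨x i₀, hi₀⟩
  have hy : Tendsto y D atTop := tendsto_atTop.2 fun a => by
    filter_upwards [hx, a.2] with i hi hai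
    simpa [y, hi, ← Subtype.coe_le_coe] using hai.le
  rw [cofinCard_eq_cof]
  exact ⟨Order.isRegular_cof Order.aleph0_le_cof,
    (exists_tendsto_atTop_iff_decomposable_cof Order.aleph0_le_cof).1 ⟨y, hy⟩⟩

end LowerCut

section Gaps

variable {X : Type u} [LinearOrder X]

theorem IsGapType.of_dual {ν : Cardinal.{u}} {A B : Set X} (h : IsGapType (X := Xᵒᵈ) ν A B) :
    IsGapType ν B A :=
  h.symm

theorem IsPseudoGapType.of_dual {ν : Cardinal.{u}} {A B : Set X}
    (h : IsPseudoGapType (X := Xᵒᵈ) ν A B) : IsPseudoGapType ν B A :=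
  h.symm

variable [TopologicalSpace X]

theorem isGap_or_isPseudoGap_of_isClopen {L : Set X} (hL : IsClopen L) (hlow : IsLowerSet L)
    (hne : L.Nonempty) [NoMaxOrder L] :
    (IsGap L Lᶜ ∧ IsGapType (cofinCard L) L Lᶜ) ∨
      (IsPseudoGap L Lᶜ ∧ IsPseudoGapType (cofinCard L) L Lᶜ) := by
  have hmax : ¬ ∃ m ∈ L, ∀ a ∈ L, a ≤ m := fun ⟨m, hm, hmax⟩ =>
    let ⟨b, hb⟩ := exists_gt (⟨m, hm⟩ : L); (hmax b b.2).not_gt hb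
  have hlt : ∀ a ∈ L, ∀ b ∈ Lᶜ, a < b := fun a ha b hb => lt_of_not_ge fun hba => hb (hlow hba ha)
  by_cases hmin : ∃ m ∈ Lᶜ, ∀ b ∈ Lᶜ, m ≤ b
  · have hne' : Lᶜ.Nonempty := let ⟨m, hm, _⟩ := hmin; ⟨m, hm⟩
    exact Or.inr ⟨⟨hL.isOpen, hL.compl.isOpen, union_compl_self L, hlt, hne, hne',
      Or.inr ⟨hmax, hmin⟩⟩, Or.inl ⟨hmin, rfl⟩⟩
  · exact Or.inl ⟨⟨hL.isOpen, hL.compl.isOpen, union_compl_self L, hlt, hmax, hmin⟩, Or.inl rfl⟩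

theorem IsGap.of_dual {A B : Set X} (h : IsGap (X := Xᵒᵈ) A B) : IsGap B A := by
  obtain ⟨hA, hB, hAB, hlt, hmax, hmin⟩ := h
  exact ⟨hB, hA, (union_comm _ _).trans hAB, fun b hb a ha => hlt a ha b hb, hmin, hmax⟩

theorem IsPseudoGap.of_dual {A B : Set X} (h : IsPseudoGap (X := Xᵒᵈ) A B) :
    IsPseudoGap B A := by
  obtain ⟨hA, hB, hAB, hlt, hneA, hneB, h⟩ := h
  exact ⟨hB, hA, (union_comm _ _).trans hAB, fun b hb a ha => hlt a ha b hb, hneB, hneA,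
    h.symm.imp And.symm And.symm⟩

end Gaps

section NoLimit

variable {I : Type v} {D : Ultrafilter I} {X : Type u} [LinearOrder X] [TopologicalSpace X]
  {x : I → X}

theorem isClopen_lowerCut (hX : HasOrdConnectedBasis X) (hx : ∀ p, ¬ Tendsto x D (𝓝 p)) :
    IsClopen (lowerCut D x) := by
  set L := lowerCut D x
  have hside (p : X) : ∀ᶠ q in 𝓝 p, (q ∈ L ↔ p ∈ L) := by
    obtain ⟨U, hU, hpU, hxU⟩ : ∃ U, IsOpen U ∧ p ∈ U ∧ x ⁻¹' U ∉ (D : Filter I) := by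
      simpa only [tendsto_nhds, not_forall, exists_prop] using hx p
    obtain ⟨V, hV, hVc, hpV, hVU⟩ := hX.exists_ordConnected_subset hU hpU
    have hVL : ∀ a ∈ V, a ∈ L → ∀ b ∈ V, b ∈ L := fun a ha haL b hb => by_contra fun hbL =>
      hxU ((eventually_mem_of_mem_lowerCut_of_notMem haL hbL hVc ha hb).mono fun _ hi => hVU hi)
    filter_upwards [hV.mem_nhds hpV] with q hq
    exact ⟨fun hqL => hVL q hq hqL p hpV, fun hpL => hVL p hpV hpL q hq⟩
  exact ⟨isOpen_compl_iff.1 <| isOpen_iff_mem_nhds.2 fun p hp =>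
      (hside p).mono fun _ hq => hq.not.2 hp,
    isOpen_iff_mem_nhds.2 fun p hp => (hside p).mono fun _ hq => hq.2 hp⟩

theorem eventually_mem_lowerCut_toDual (hx : ∀ p, ¬ Tendsto x D (𝓝 p))
    (hxL : ¬ ∀ᶠ i in (D : Filter I), x i ∈ lowerCut D x) :
    ∀ᶠ i in (D : Filter I), toDual (x i) ∈ lowerCut D (toDual ∘ x) := by
  filter_upwards [Ultrafilter.eventually_not.2 hxL] with i hi
  have hle : ∀ᶠ j in (D : Filter I), x j ≤ x i :=
    (Ultrafilter.eventually_not.2 hi).mono fun _ hj => not_lt.1 hj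
  have hne : ∀ᶠ j in (D : Filter I), x j ≠ x i :=
    Ultrafilter.eventually_not.2 fun h => hx (x i) (tendsto_nhds_of_eventually_eq h)
  exact (hle.and hne).mono fun _ hj => hj.1.lt_of_ne hj.2

theorem exists_gap_of_eventually_mem_lowerCut (hX : HasOrdConnectedBasis X)
    (hx : ∀ p, ¬ Tendsto x D (𝓝 p)) (hxL : ∀ᶠ i in (D : Filter I), x i ∈ lowerCut D x) :
    ∃ ν : Cardinal.{u}, ℵ₀ ≤ ν ∧ ν.IsRegular ∧ Decomposable D ν ∧
      ((IsGap (lowerCut D x) (lowerCut D x)ᶜ ∧ IsGapType ν (lowerCut D x) (lowerCut D x)ᶜ) ∨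
        (IsPseudoGap (lowerCut D x) (lowerCut D x)ᶜ ∧
          IsPseudoGapType ν (lowerCut D x) (lowerCut D x)ᶜ)) := by
  have := noMaxOrder_lowerCut hxL
  obtain ⟨hreg, hD⟩ := isRegular_cofinCard_lowerCut_and_decomposable hxL
  obtain ⟨i, hi⟩ := hxL.exists
  exact ⟨_, hreg.aleph0_le, hreg, hD,
    isGap_or_isPseudoGap_of_isClopen (isClopen_lowerCut hX hx) isLowerSet_lowerCut ⟨x i, hi⟩⟩

end NoLimit

/-- A GO space is `D`-compact iff it has no gap and no pseudo-gap whose type is an infinite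
regular cardinal `ν` such that `D` is `ν`-decomposable. -/
theorem stmt10 {I : Type v} (D : Ultrafilter I)
    (X : Type u) [LinearOrder X] [TopologicalSpace X] [T2Space X]
    (hGO : ∃ 𝓑 : Set (Set X), IsTopologicalBasis 𝓑 ∧ ∀ s ∈ 𝓑, s.OrdConnected) :
    DCompact D X ↔
      ¬ ∃ (A B : Set X) (ν : Cardinal.{u}), ℵ₀ ≤ ν ∧ ν.IsRegular ∧ Decomposable D ν ∧
        ((IsGap A B ∧ IsGapType ν A B) ∨ (IsPseudoGap A B ∧ IsPseudoGapType ν A B)) := by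
  have hX : HasOrdConnectedBasis X := hGO
  have := hX.closedIciTopology
  have := hX.closedIicTopology
  constructor
  · rintro hDC ⟨A, B, ν, hν, -, hD,
      ⟨⟨hA, hB, hAB, hlt, -⟩, htype⟩ | ⟨⟨hA, hB, hAB, hlt, -⟩, htype⟩⟩
    · exact not_dCompact_of_isGapType hA hB hAB hlt hν hD htype hDC
    · exact not_dCompact_of_isGapType hA hB hAB hlt hν hD (htype.imp And.right And.right) hDC
  · intro hno
    by_contra hnc
    obtain ⟨x, hx⟩ : ∃ x : I → X, ∀ p, ¬ Tendsto x D (𝓝 p) := by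
      simpa [DCompact, dConv_iff_tendsto] using hnc
    by_cases hxL : ∀ᶠ i in (D : Filter I), x i ∈ lowerCut D x
    · exact hno ⟨_, _, exists_gap_of_eventually_mem_lowerCut hX hx hxL⟩
    · obtain ⟨ν, hν, hreg, hD, hcut⟩ := exists_gap_of_eventually_mem_lowerCut hX.dual
        (fun p => hx (ofDual p)) (eventually_mem_lowerCut_toDual hx hxL)
      exact hno ⟨_, _, ν, hν, hreg, hD, hcut.imp (And.imp IsGap.of_dual IsGapType.of_dual)
        (And.imp IsPseudoGap.of_dual IsPseudoGapType.of_dual)⟩
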